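/- arXiv:2409.05023 — 3 statements merged into one kernel-verified Lean document; each statement's English description precedes it below -/
import Mathlib

section
/- Let (x_k) be a sequence of nonnegative reals satisfying, for every T ≥ 1, x_T ≤ a√x_T + b√(x_T · ln(max(x_T, e))) + c·ln(T)·√x_T + σ·T, where a, b, c, σ > 0. Then there exists a constant K (depending on a, b, c, σ) such that x_T ≤ K·T for all T ≥ 1. -/
lemma sqrt_amgm (p q : ℝ) (hp : 0 ≤ p) (hq : 0 ≤ q) (ε : ℝ) (hε : 0 < ε) :
    Real.sqrt (p * q) ≤ ε * p + q / (4 * ε) := by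
  have h : p * q ≤ (ε * p + q / (4 * ε))^2 := by
    have := sq_nonneg (ε * p - q / (4 * ε))
    have h4 : (0:ℝ) < 4 * ε := by linarith
    have : ε * p * (q / (4 * ε)) = p * q / 4 := by field_simp
    nlinarith [sq_nonneg (ε * p - q / (4 * ε)), mul_nonneg hp hq]
  calc Real.sqrt (p * q) ≤ Real.sqrt ((ε * p + q / (4 * ε))^2) := Real.sqrt_le_sqrt h
    _ = ε * p + q / (4 * ε) := Real.sqrt_sq (by positivity)

lemma log_le_two_sqrt (z : ℝ) (hz : 0 < z) : Real.log z ≤ 2 * Real.sqrt z := by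
  have h := Real.log_le_sub_one_of_pos (Real.sqrt_pos.2 hz)
  have h2 : Real.log (Real.sqrt z) = Real.log z / 2 := Real.log_sqrt hz.le
  nlinarith [Real.sqrt_nonneg z]

/-- A nonnegative sequence satisfying the self-bounding inequality
`x_T ≤ a√x_T + b√(x_T ln(max(x_T, e))) + c ln T √x_T + σT` for every `T ≥ 1`
grows at most linearly: `x_T ≤ K T`. -/
theorem stmt12 (x : ℕ → ℝ) (hx : ∀ T, 0 ≤ x T)
    (a b c σ : ℝ) (ha : 0 < a) (hb : 0 < b) (hc : 0 < c) (hσ : 0 < σ)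
    (hineq : ∀ T : ℕ, 1 ≤ T →
      x T ≤ a * Real.sqrt (x T) +
        b * Real.sqrt (x T * Real.log (max (x T) (Real.exp 1))) +
        c * Real.log T * Real.sqrt (x T) + σ * T) :
    ∃ K : ℝ, ∀ T : ℕ, 1 ≤ T → x T ≤ K * T := by
  refine ⟨2 * (2*a^2 + 256*b^4 + 16*b^2 + 8*c^2 + σ), fun T hT => ?_⟩
  have hT1 : (1:ℝ) ≤ (T:ℝ) := by exact_mod_cast hT
  have hT0 : (0:ℝ) < (T:ℝ) := by linarith
  set y := x T with hy_def
  have hy : 0 ≤ y := hx T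
  have hs : Real.sqrt y ^ 2 = y := Real.sq_sqrt hy
  have hsnn := Real.sqrt_nonneg y
  set m := Real.log (max y (Real.exp 1)) with hm_def
  have hmax_pos : (0:ℝ) < max y (Real.exp 1) :=
    lt_of_lt_of_le (Real.exp_pos 1) (le_max_right _ _)
  have hm1 : 1 ≤ m := by
    exact (Real.le_log_iff_exp_le hmax_pos).2 (le_max_right _ _)
  have hm0 : 0 ≤ m := by linarith
  have he4 : Real.exp 1 ≤ 4 := by
    have := Real.exp_one_lt_d9; linarith
  -- Term 1 : a √y ≤ y/8 + 2a²
  have ht1 : a * Real.sqrt y ≤ (1/8) * y + 2 * a^2 := by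
    have : a * Real.sqrt y = Real.sqrt (y * a^2) := by
      rw [Real.sqrt_mul hy, Real.sqrt_sq ha.le]; ring
    rw [this]
    have := sqrt_amgm y (a^2) hy (by positivity) (1/8) (by norm_num)
    calc Real.sqrt (y * a^2) ≤ (1/8) * y + a^2 / (4 * (1/8)) := this
      _ = (1/8) * y + 2 * a^2 := by ring
  -- bound on m : m ≤ 2 √y + 4
  have hm_bound : m ≤ 2 * Real.sqrt y + 4 := by
    have h1 : m ≤ 2 * Real.sqrt (max y (Real.exp 1)) := log_le_two_sqrt _ hmax_pos
    have h2 : Real.sqrt (max y (Real.exp 1)) ≤ Real.sqrt y + 2 := by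
      have hle : max y (Real.exp 1) ≤ y + 4 := by
        rcases max_cases y (Real.exp 1) with ⟨h, _⟩ | ⟨h, _⟩ <;> rw [h] <;> linarith
      calc Real.sqrt (max y (Real.exp 1)) ≤ Real.sqrt ((Real.sqrt y + 2)^2) := by
            apply Real.sqrt_le_sqrt; nlinarith
        _ = Real.sqrt y + 2 := Real.sqrt_sq (by positivity)
    linarith
  -- Term 2 : b √(y m) ≤ y/8 + 256 b⁴ + 16 b²
  have ht2 : b * Real.sqrt (y * m) ≤ (1/8) * y + 256 * b^4 + 16 * b^2 := by
    have heq : Real.sqrt (y * (b^2 * m)) = b * Real.sqrt (y * m) := by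
      rw [show y * (b^2 * m) = b^2 * (y * m) by ring,
        Real.sqrt_mul (sq_nonneg b) (y * m), Real.sqrt_sq hb.le]
    rw [← heq]
    have h1 := sqrt_amgm y (b^2 * m) hy (by positivity) (1/16) (by norm_num)
    have h2 : (b^2 * m) / (4 * (1/16)) = 4 * b^2 * m := by ring
    have h3 : 8 * b^2 * Real.sqrt y ≤ (1/16) * y + 256 * b^4 := by
      have : Real.sqrt (y * (64 * b^4)) = 8 * b^2 * Real.sqrt y := by
        rw [show y * (64 * b^4) = (8*b^2)^2 * y by ring,
          Real.sqrt_mul (sq_nonneg (8*b^2)) y, Real.sqrt_sq (by positivity)]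
      rw [← this]
      have := sqrt_amgm y (64 * b^4) hy (by positivity) (1/16) (by norm_num)
      calc Real.sqrt (y * (64 * b^4)) ≤ (1/16) * y + (64 * b^4) / (4 * (1/16)) := this
        _ = (1/16) * y + 256 * b^4 := by ring
    have h4 : 4 * b^2 * m ≤ 8 * b^2 * Real.sqrt y + 16 * b^2 := by nlinarith [sq_nonneg b]
    calc Real.sqrt (y * (b^2 * m)) ≤ (1/16) * y + (b^2 * m) / (4 * (1/16)) := h1
      _ = (1/16) * y + 4 * b^2 * m := by ring
      _ ≤ (1/16) * y + (8 * b^2 * Real.sqrt y + 16 * b^2) := by linarith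
      _ ≤ (1/16) * y + ((1/16) * y + 256 * b^4 + 16 * b^2) := by linarith
      _ = (1/8) * y + 256 * b^4 + 16 * b^2 := by ring
  -- Term 3 : c log T √y ≤ y/8 + 8 c² T
  have ht3 : c * Real.log T * Real.sqrt y ≤ (1/8) * y + 8 * c^2 * T := by
    have hlog : Real.log T ≤ 2 * Real.sqrt T := log_le_two_sqrt _ hT0
    have hsT := Real.sqrt_nonneg (T:ℝ)
    have h1 : c * Real.log T * Real.sqrt y ≤ 2 * c * Real.sqrt T * Real.sqrt y := by
      nlinarith [mul_nonneg hc.le hsnn]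
    have h2 : Real.sqrt (y * (4 * c^2 * T)) = 2 * c * Real.sqrt T * Real.sqrt y := by
      rw [show y * (4 * c^2 * T) = (2*c)^2 * ((T:ℝ) * y) by ring,
        Real.sqrt_mul (sq_nonneg (2*c)) ((T:ℝ) * y), Real.sqrt_mul hT0.le y,
        Real.sqrt_sq (by positivity)]
      ring
    have h3 := sqrt_amgm y (4 * c^2 * T) hy (by positivity) (1/8) (by norm_num)
    calc c * Real.log T * Real.sqrt y ≤ Real.sqrt (y * (4 * c^2 * T)) := by rw [h2]; exact h1
      _ ≤ (1/8) * y + (4 * c^2 * T) / (4 * (1/8)) := h3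
      _ = (1/8) * y + 8 * c^2 * T := by ring
  have hiq := hineq T hT
  rw [← hy_def, ← hm_def] at hiq
  have hKey : y ≤ (3/8) * y + (2*a^2 + 256*b^4 + 16*b^2) + (8*c^2 + σ) * T := by
    linarith
  have hC0 : (0:ℝ) ≤ 2*a^2 + 256*b^4 + 16*b^2 := by positivity
  have hconst : (2*a^2 + 256*b^4 + 16*b^2) ≤ (2*a^2 + 256*b^4 + 16*b^2) * T :=
    le_mul_of_one_le_right hC0 hT1
  have hK0 : (0:ℝ) ≤ 2*a^2 + 256*b^4 + 16*b^2 + 8*c^2 + σ := by positivity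
  nlinarith [mul_nonneg hK0 hT0.le]
end

section
/- Consider the RMSProp recursion v_{1,i} = β₁ v + (1 − β₁) G_{1,i}² and v_{t+1,i} = (1 − 1/(t+1)) v_{t,i} + (1/(t+1)) G_{t+1,i}² for t ≥ 1, with v > 0 and β₁ ∈ (0,1). Define S_{t,i} = v + Σ_{k=1}^{t} G_{k,i}². Then for all t ≥ 1, t·v_{t,i} ≥ r₁·S_{t,i}, where r₁ = min(β₁, 1 − β₁). -/
/-!
With step size `1/(t+1)` the recursion is a running mean: `(t+1) v_{t+1} = t v_t + G_{t+1}²`,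
so `t v_t = v_1 + Σ_{k=2}^t G_k²`. Compared with `S_t = v + G_1² + Σ_{k=2}^t G_k²`, the three
summands carry the weights `β₁`, `1 - β₁` and `1`, each at least `min β₁ (1 - β₁) ≤ 1/2`.
-/

open Finset

theorem mul_eq_add_sum_Ioc_of_running_mean (v a : ℕ → ℝ)
    (hrec : ∀ t : ℕ, 1 ≤ t →
      v (t + 1) = (1 - 1 / ((t : ℝ) + 1)) * v t + (1 / ((t : ℝ) + 1)) * a (t + 1))
    {t : ℕ} (ht : 1 ≤ t) :
    (t : ℝ) * v t = v 1 + ∑ k ∈ Ioc 1 t, a k := by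
  induction t, ht using Nat.le_induction with
  | base => simp
  | succ n hn ih =>
    have hstep : ((n : ℝ) + 1) * v (n + 1) = n * v n + a (n + 1) := by
      rw [hrec n hn]
      field_simp
      ring
    rw [sum_Ioc_succ_top hn, Nat.cast_succ, hstep, ih, add_assoc]

theorem min_mul_add_add_le (β x y z : ℝ) (hx : 0 ≤ x) (hy : 0 ≤ y) (hz : 0 ≤ z) :
    min β (1 - β) * (x + y + z) ≤ β * x + (1 - β) * y + z := by
  have hβ := min_le_left β (1 - β)
  have hβ' := min_le_right β (1 - β)
  nlinarith [mul_le_mul_of_nonneg_right hβ hx, mul_le_mul_of_nonneg_right hβ' hy]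

theorem stmt14_general (v G : ℕ → ℝ) (vinit β₁ : ℝ) (hvinit : 0 < vinit)
    (h1 : v 1 = β₁ * vinit + (1 - β₁) * G 1 ^ 2)
    (hrec : ∀ t : ℕ, 1 ≤ t →
      v (t + 1) = (1 - 1 / ((t : ℝ) + 1)) * v t + (1 / ((t : ℝ) + 1)) * G (t + 1) ^ 2) :
    ∀ t : ℕ, 1 ≤ t →
      min β₁ (1 - β₁) * (vinit + ∑ k ∈ Finset.Icc 1 t, G k ^ 2) ≤ (t : ℝ) * v t := by
  intro t ht
  rw [mul_eq_add_sum_Ioc_of_running_mean v (fun k => G k ^ 2) hrec ht, h1,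
    ← add_sum_Ioc_eq_sum_Icc ht, ← add_assoc]
  exact min_mul_add_add_le β₁ _ _ _ hvinit.le (sq_nonneg _)
    (sum_nonneg fun k _ => sq_nonneg (G k))

/-- For the RMSProp recursion with `v_1 = β₁ v + (1−β₁)G_1²` and
`v_{t+1} = (1 − 1/(t+1)) v_t + (1/(t+1)) G_{t+1}²`, for all `t ≥ 1` one has
`t·v_t ≥ r₁·S_t` where `S_t = v + Σ_{k=1}^t G_k²` and `r₁ = min(β₁, 1−β₁)`. -/
theorem stmt14 (v G : ℕ → ℝ) (vinit β₁ : ℝ) (hvinit : 0 < vinit)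
    (hβ : β₁ ∈ Set.Ioo (0 : ℝ) 1) (hG : ∀ t, 0 ≤ G t)
    (h1 : v 1 = β₁ * vinit + (1 - β₁) * G 1 ^ 2)
    (hrec : ∀ t : ℕ, 1 ≤ t →
      v (t + 1) = (1 - 1 / ((t : ℝ) + 1)) * v t + (1 / ((t : ℝ) + 1)) * G (t + 1) ^ 2) :
    ∀ t : ℕ, 1 ≤ t →
      min β₁ (1 - β₁) * (vinit + ∑ k ∈ Finset.Icc 1 t, G k ^ 2) ≤ (t : ℝ) * v t :=
  stmt14_general v G vinit β₁ hvinit h1 hrec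
end

section
/- Let S_0 > 0, let G_n ∈ ℝ^d, S_n = S_{n-1} + ‖G_n‖², and define ζ = √S_0 + Σ_{n=1}^{∞} ‖G_n‖²/(n²·√S_{n-1}) (assumed finite). Then for every T ≥ 1, √S_T ≤ (1 + ζ)·T². -/
/-- For the AdaGrad recursion `S_n = S_{n-1} + ‖G_n‖²`, with
`ζ = √S_0 + Σ_{n=1}^∞ ‖G_n‖²/(n²√S_{n-1})` finite, for every `T ≥ 1` one has
`√S_T ≤ (1 + ζ)·T²`. -/
theorem stmt18 {d : ℕ} (S : ℕ → ℝ) (G : ℕ → EuclideanSpace ℝ (Fin d))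
    (hS0 : 0 < S 0) (hrec : ∀ n : ℕ, S (n + 1) = S n + ‖G (n + 1)‖ ^ 2)
    (hsum : Summable fun n : ℕ => ‖G (n + 1)‖ ^ 2 / (((n : ℝ) + 1) ^ 2 * Real.sqrt (S n)))
    (ζ : ℝ)
    (hζ : ζ = Real.sqrt (S 0) +
      ∑' n : ℕ, ‖G (n + 1)‖ ^ 2 / (((n : ℝ) + 1) ^ 2 * Real.sqrt (S n))) :
    ∀ T : ℕ, 1 ≤ T → Real.sqrt (S T) ≤ (1 + ζ) * (T : ℝ) ^ 2 := by
  have hSpos : ∀ n, 0 < S n := by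
    intro n
    induction n with
    | zero => exact hS0
    | succ k ih => rw [hrec]; positivity
  have hmono : Monotone S := by
    apply monotone_nat_of_le_succ
    intro n
    rw [hrec]
    nlinarith [sq_nonneg ‖G (n + 1)‖]
  have hsq : ∀ n, 0 < Real.sqrt (S n) := fun n => Real.sqrt_pos.mpr (hSpos n)
  have hST : ∀ T : ℕ, S T = S 0 + ∑ n ∈ Finset.range T, ‖G (n + 1)‖ ^ 2 := by
    intro T
    induction T with
    | zero => simp
    | succ k ih => rw [hrec, ih, Finset.sum_range_succ]; ring
  intro T hT
  have hTpos : (1 : ℝ) ≤ (T : ℝ) := by exact_mod_cast hT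
  have hT2 : (1 : ℝ) ≤ (T : ℝ) ^ 2 := by nlinarith
  -- √S_T = S_T/√S_T
  have key : Real.sqrt (S T)
      = S 0 / Real.sqrt (S T) + ∑ n ∈ Finset.range T, ‖G (n + 1)‖ ^ 2 / Real.sqrt (S T) := by
    rw [← Finset.sum_div, ← add_div, ← hST, Real.div_sqrt]
  have h1 : S 0 / Real.sqrt (S T) ≤ Real.sqrt (S 0) := by
    rw [← Real.div_sqrt (x := S 0)]
    exact div_le_div_of_nonneg_left hS0.le (hsq 0)
      (Real.sqrt_le_sqrt (hmono (Nat.zero_le T)))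
  have h2 : ∀ n ∈ Finset.range T, ‖G (n + 1)‖ ^ 2 / Real.sqrt (S T)
      ≤ (T : ℝ) ^ 2 * (‖G (n + 1)‖ ^ 2 / (((n : ℝ) + 1) ^ 2 * Real.sqrt (S n))) := by
    intro n hn
    rw [Finset.mem_range] at hn
    have hn1 : ((n : ℝ) + 1) ≤ (T : ℝ) := by exact_mod_cast hn
    have hn0 : (0 : ℝ) < (n : ℝ) + 1 := by positivity
    have hSn : Real.sqrt (S n) ≤ Real.sqrt (S T) :=
      Real.sqrt_le_sqrt (hmono hn.le)
    rw [mul_div_assoc', div_le_div_iff₀ (hsq T) (mul_pos (by positivity) (hsq n))]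
    have ha : ((n : ℝ) + 1) ^ 2 ≤ (T : ℝ) ^ 2 := by nlinarith
    have hb : ((n : ℝ) + 1) ^ 2 * Real.sqrt (S n) ≤ (T : ℝ) ^ 2 * Real.sqrt (S T) :=
      mul_le_mul ha hSn (hsq n).le (by positivity)
    nlinarith [mul_le_mul_of_nonneg_left hb (sq_nonneg ‖G (n + 1)‖)]
  have h3 : ∑ n ∈ Finset.range T, ‖G (n + 1)‖ ^ 2 / Real.sqrt (S T)
      ≤ (T : ℝ) ^ 2 * ∑ n ∈ Finset.range T,
        ‖G (n + 1)‖ ^ 2 / (((n : ℝ) + 1) ^ 2 * Real.sqrt (S n)) := by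
    rw [Finset.mul_sum]
    exact Finset.sum_le_sum h2
  have h4 : ∑ n ∈ Finset.range T, ‖G (n + 1)‖ ^ 2 / (((n : ℝ) + 1) ^ 2 * Real.sqrt (S n))
      ≤ ∑' n : ℕ, ‖G (n + 1)‖ ^ 2 / (((n : ℝ) + 1) ^ 2 * Real.sqrt (S n)) :=
    Summable.sum_le_tsum _ (fun n _ => by positivity) hsum
  have htsum : (0 : ℝ) ≤ ∑' n : ℕ, ‖G (n + 1)‖ ^ 2 / (((n : ℝ) + 1) ^ 2 * Real.sqrt (S n)) :=
    tsum_nonneg (fun n => by positivity)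
  have hs0 : (0 : ℝ) ≤ Real.sqrt (S 0) := Real.sqrt_nonneg _
  nlinarith [mul_le_mul_of_nonneg_left h4 (le_of_lt (lt_of_lt_of_le one_pos hT2))]
end
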